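/- Let π be a k-colored permutation with insertion pair (P, Q) = (P(π), Q(π)). If the shadow line L_i of the square diagram of π passes through a single X^j, then the i-th column of P and the column of Q in the same position each consist of a single k-ribbon of height j. -/

import Mathlib

namespace KRF

/-- A letter of the alphabet `{1_1, …, 1_k, 2}`:  `one j` stands for the letter `1_j`
(with `1 ≤ j ≤ k` for genuine letters), and `two` stands for the letter `2`. -/
inductive Letter (k : ℕ) : Type where
  | one : ℕ → Letter k
  | two : Letter k
deriving DecidableEq

/-- A word over the alphabet `{1_1, …, 1_k, 2}`, listed from the leftmost letter to the
rightmost letter. -/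
abbrev Word (k : ℕ) := List (Letter k)

/-- The contribution of a letter to the rank: each `1_j` counts `1` and each `2` counts `2`. -/
def Letter.rank {k : ℕ} : Letter k → ℕ
  | .one _ => 1
  | .two => 2

/-- The rank of a word: the sum of its letters. -/
def Word.rank {k : ℕ} (w : Word k) : ℕ := (w.map Letter.rank).sum

/-- The letter `1_j` is valid when `1 ≤ j ≤ k`. -/
def Letter.Valid (k : ℕ) : Letter k → Prop
  | .one j => 1 ≤ j ∧ j ≤ k
  | .two => True

/-- A genuine word of the Fibonacci poset `Z(k)`: all of its letters are valid. -/
def Word.Valid (k : ℕ) (w : Word k) : Prop := ∀ l ∈ w, l.Valid k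

/-- The cover relation of the Fibonacci poset `Z(k)`:  `z` is covered by `w` iff `z` is
obtained from `w` either by changing a `2` into some `1_j` when all letters to the left of
that `2` are `2`'s, or by deleting the leftmost letter of the form `1_j`. -/
def ZCovers (k : ℕ) (z w : Word k) : Prop :=
  (∃ (p s : Word k) (j : ℕ), (∀ l ∈ p, l = Letter.two) ∧ 1 ≤ j ∧ j ≤ k ∧
      w = p ++ Letter.two :: s ∧ z = p ++ Letter.one j :: s) ∨
  (∃ (p s : Word k) (j : ℕ), (∀ l ∈ p, l = Letter.two) ∧ 1 ≤ j ∧ j ≤ k ∧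
      w = p ++ Letter.one j :: s ∧ z = p ++ s)

/-- `c 0 ⋖ c 1 ⋖ ⋯ ⋖ c n` is a saturated chain in `Z(k)` starting at the empty word. -/
def IsZChain (k n : ℕ) (c : ℕ → Word k) : Prop :=
  c 0 = [] ∧ ∀ i, i < n → ZCovers k (c i) (c (i + 1))

end KRF
namespace KRF

/-- A column of a (tiled and filled) `k`-ribbon Fibonacci tableau.
`single h v` is a column of height 1 (shape letter `1_h`) tiled by one `k`-ribbon of
height `h` filled with the value `v`.
`double ht hb vt vb` is a column of height 2 (shape letter `2`) tiled by a `k`-ribbon of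
height `ht` filled with `vt` stacked on top of a `k`-ribbon of height `hb` (always
`hb = k + 1 - ht` for genuine tableaux) filled with `vb`. -/
inductive Col (k : ℕ) : Type where
  | single : ℕ → ℕ → Col k
  | double : ℕ → ℕ → ℕ → ℕ → Col k
deriving DecidableEq

/-- A (tiled, filled) `k`-ribbon Fibonacci tableau: its list of columns, from the leftmost
column to the rightmost one. -/
abbrev Tab (k : ℕ) := List (Col k)

/-- The shape letter of a column. -/
def Col.shape {k : ℕ} : Col k → Letter k
  | .single h _ => Letter.one h
  | .double _ _ _ _ => Letter.two

/-- The `k`-ribbon Fibonacci shape (a word) underlying a tableau. -/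
def Tab.shape {k : ℕ} (T : Tab k) : Word k := T.map Col.shape

/-- The value in the bottom `k`-ribbon of a column. -/
def Col.bottomVal {k : ℕ} : Col k → ℕ
  | .single _ v => v
  | .double _ _ _ vb => vb

/-- The heights occurring in a column are genuine ribbon heights: between `1` and `k`,
and in a column of height 2 the two heights sum to `k + 1`. -/
def Col.HeightsValid (k : ℕ) : Col k → Prop
  | .single h _ => 1 ≤ h ∧ h ≤ k
  | .double ht hb _ _ => 1 ≤ ht ∧ ht ≤ k ∧ hb = k + 1 - ht

/-- The list of all entries of a tableau (one for each `k`-ribbon). -/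
def Tab.entries {k : ℕ} (T : Tab k) : List ℕ :=
  (T.map fun c => match c with
    | Col.single _ v => [v]
    | Col.double _ _ vt vb => [vt, vb]).flatten

/-- The list of the bottom-ribbon values of the columns of a tableau. -/
def Tab.bottoms {k : ℕ} (T : Tab k) : List ℕ := T.map Col.bottomVal

/-- `T` is a standard `k`-ribbon Fibonacci tableau with entries `1, …, n`:
heights are valid, the entries are exactly `1, …, n`,  and the tableau can be built by
placing `n, n-1, …, 1` in order, each new `k`-ribbon being either appended (as a new
rightmost height-1 column) to the shape formed by the `k`-ribbons containing larger
entries, or stacked on top of a single such `k`-ribbon.  Equivalently (and this is how we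
formalize it): the bottom entries strictly decrease from left to right (in particular the
`k`-ribbon containing the leftmost square of the bottom row contains `n`), and in each
column of height 2 the top entry is smaller than the bottom entry. -/
def IsStandardTab (k n : ℕ) (T : Tab k) : Prop :=
  (∀ c ∈ T, Col.HeightsValid k c) ∧
  (Tab.entries T).Perm (List.range' 1 n) ∧
  List.Chain' (fun a b => b < a) (Tab.bottoms T) ∧
  (∀ c ∈ T, ∀ ht hb vt vb, c = Col.double ht hb vt vb → vt < vb)

/-- Updating a (partial) path tableau along one cover step `z ⋖ w` of `Z(k)`, placing the
value `i` in the `k` new squares of `w` relative to `z`:  if `w` is obtained from `z` by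
inserting a letter `1_j` after the prefix of `2`'s, a new height-1 column with a single
ribbon of height `j` filled with `i` is created there; if `w` is obtained from `z` by
changing the letter `1_h` just after the prefix of `2`'s into a `2`, the `k` new squares
of that column form a `k`-ribbon of height `k + 1 - h` filled with `i`, stacked on top of
the already present `k`-ribbon of height `h`. -/
def updateTab (k : ℕ) (i : ℕ) : Word k → Word k → Tab k → Tab k
  | Letter.two :: z', Letter.two :: w', c :: T => c :: updateTab k i z' w' T
  | Letter.one h :: _, Letter.two :: _, Col.single _ v :: T =>
      Col.double (k + 1 - h) h i v :: T
  | z, Letter.one j :: w', T => if z = w' then Col.single j i :: T else T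
  | _, _, T => T

/-- The `k`-ribbon Fibonacci path tableau determined by a saturated chain in `Z(k)`:
for each `i = 1, …, n` the value `i` is placed in the `k` new squares of `c i` relative
to `c (i-1)`. -/
def chainTab (k : ℕ) (c : ℕ → Word k) : ℕ → Tab k
  | 0 => []
  | m + 1 => updateTab k (m + 1) (c m) (c (m + 1)) (chainTab k c m)

/-- `T` is a `k`-ribbon Fibonacci path tableau with entries `1, …, n`: it is obtained
from some saturated chain `∅ = c 0 ⋖ c 1 ⋖ ⋯ ⋖ c n` in `Z(k)` by placing `i`'s in the
`k` new squares created at the `i`-th step. -/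
def IsPathTab (k n : ℕ) (T : Tab k) : Prop :=
  ∃ c : ℕ → Word k, IsZChain k n c ∧ T = chainTab k c n

end KRF
namespace KRF

/-- A `k`-colored permutation of length `n`: a permutation `x_1 x_2 ⋯ x_n` of `{1, …, n}`
(here `x_i = perm i + 1`, using `Fin n` positions and values) together with a color
`color i ∈ {1, …, k}` attached to each entry. -/
structure ColoredPerm (n k : ℕ) : Type where
  perm : Equiv.Perm (Fin n)
  color : Fin n → ℕ
  color_pos : ∀ i, 1 ≤ color i
  color_le : ∀ i, color i ≤ k

/-- Insertion of a value `x` of color `j` into a `k`-ribbon Fibonacci tableau: compare `x`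
with the value `t` in the `k`-ribbon containing the leftmost square of the bottom row.
If the tableau is empty or `x > t`, a new leftmost height-1 column consisting of a single
`k`-ribbon of height `j` filled with `x` is created.  If `x < t`, a `k`-ribbon of height
`j` filled with `x` is placed on top of the `k`-ribbon containing `t` (which is forced to
become a `k`-ribbon of height `k + 1 - j`); if a `k`-ribbon of height `l` filled with `b`
was already on top of the ribbon containing `t`, it is bumped out and the value `b` with
color `l` is inserted recursively into the tableau formed by the columns to the right. -/
def insertVal (k : ℕ) (x j : ℕ) : Tab k → Tab k
  | [] => [Col.single j x]
  | c :: rest =>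
    if Col.bottomVal c < x then Col.single j x :: c :: rest
    else
      match c with
      | Col.single _ v => Col.double j (k + 1 - j) x v :: rest
      | Col.double ht _ vt vb => Col.double j (k + 1 - j) x vb :: insertVal k vt ht rest

/-- The insertion tableau obtained after inserting the first `i` colored entries
`x_1^{j_1}, …, x_i^{j_i}` of the `k`-colored permutation `π` into the empty tableau. -/
def PPartial (k n : ℕ) (π : ColoredPerm n k) (i : ℕ) : Tab k :=
  ((List.finRange n).take i).foldl
    (fun T m => insertVal k ((π.perm m : ℕ) + 1) (π.color m) T) []

/-- The insertion tableau `P(π)` of a `k`-colored permutation. -/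
def PTab (k n : ℕ) (π : ColoredPerm n k) : Tab k := PPartial k n π n

/-- The chain of shapes of the partial insertion tableaux of `π`. -/
def QChain (k n : ℕ) (π : ColoredPerm n k) (i : ℕ) : Word k :=
  Tab.shape (PPartial k n π i)

/-- The recording tableau `Q(π)`: it has the same shape as `P(π)`, and after the `i`-th
insertion the value `i` is placed in the `k` squares by which the shape grew at step `i`. -/
def QTab (k n : ℕ) (π : ColoredPerm n k) : Tab k := chainTab k (QChain k n π) n

end KRF
namespace KRF

/-- The recursive construction of the shadow lines of a square diagram, applied to the set
`S` of the positions of the `X`'s not lying on a previously drawn line.  Each line is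
recorded as the pair `(i₁, i₂)` where `i₁` is the position (column) of the highest
remaining `X` and `i₂` is the rightmost remaining column containing an `X`; the line
passes through these one or two `X`'s, which are then removed. -/
def shadowAux (n : ℕ) (p : Equiv.Perm (Fin n)) (S : Finset (Fin n)) :
    List (Fin n × Fin n) :=
  if h : S.Nonempty then
    (p.symm ((S.image p).max' (h.image p)), S.max' h) ::
      shadowAux n p ((S.erase (p.symm ((S.image p).max' (h.image p)))).erase (S.max' h))
  else []
termination_by S.card
decreasing_by
  have h1 : p.symm ((S.image p).max' (h.image p)) ∈ S := by
    obtain ⟨a, ha, hpa⟩ := Finset.mem_image.mp (Finset.max'_mem (S.image p) (h.image p))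
    simpa [← hpa] using ha
  calc ((S.erase (p.symm ((S.image p).max' (h.image p)))).erase (S.max' h)).card
      ≤ (S.erase (p.symm ((S.image p).max' (h.image p)))).card := Finset.card_erase_le
    _ < S.card := Finset.card_erase_lt_of_mem h1

/-- The list of shadow lines `L₁, L₂, …` of the square diagram of the `k`-colored
permutation `π`.  The `s`-th entry is the pair `(i₁, i₂)` of positions of the `X`'s
through which `L_s` passes: `i₁` is the column of the highest `X` on the line and `i₂` is
the rightmost column of an `X` on the line (the line passes through a single `X` exactly
when `i₁ = i₂`; when `i₁ ≠ i₂` the `X` in column `i₁` is the leftmost, higher one). -/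
def shadowLines {n k : ℕ} (π : ColoredPerm n k) : List (Fin n × Fin n) :=
  shadowAux n π.perm Finset.univ

end KRF

/-! The `X` at position `t` that is highest among the remaining ones carries a value larger
than every value inserted before it, so it opens a new leftmost column.  Every later letter
is smaller: it is stacked on that column and bumps the previous top ribbon into the columns
to the right.  Hence, if `r` is the rightmost remaining position, the first column of the
insertion tableau has the value of `t` at the bottom and the letter at `r` on top (a single
ribbon of color `col t` when `t = r`), and the other columns are the insertion tableau of the
word with `t` and `r` removed.  This is exactly the recursion drawing the shadow lines, so the
`i`-th column of `P(π)` is read off `L_i`.  Finally `Q(π)` has the shape of `P(π)`, and a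
column of height one is determined by its shape letter up to its entry. -/

theorem Finset.sort_erase {α : Type*} [LinearOrder α] (S : Finset α) (a : α) :
    (S.erase a).sort = S.sort.erase a := by
  refine List.Perm.eq_of_pairwise' (Finset.pairwise_sort _ _)
    ((Finset.pairwise_sort S _).sublist List.erase_sublist) ?_
  refine (Finset.sort_perm_toList _ _).trans
    (.trans ?_ ((Finset.sort_perm_toList S _).erase a).symm)
  rw [← Multiset.coe_eq_coe]
  simp [← Multiset.coe_erase]

theorem Finset.sort_eq_sort_erase_max'_append {α : Type*} [LinearOrder α] (S : Finset α)
    (h : S.Nonempty) : S.sort = (S.erase (S.max' h)).sort ++ [S.max' h] := by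
  have hne : S.sort ≠ [] := by simpa [← List.length_pos_iff] using h.card_pos
  have hlast : S.sort.getLast hne = S.max' h := by
    rw [Finset.max'_eq_sorted_last, List.getLast_eq_getElem]
  obtain ⟨d, hd⟩ : ∃ d, S.sort (· ≤ ·) = d ++ [S.max' h] :=
    ⟨S.sort.dropLast, by rw [← hlast]; exact (List.dropLast_append_getLast hne).symm⟩
  have hnotmem : S.max' h ∉ d := by
    have hnd : (d ++ [S.max' h]).Nodup := hd ▸ S.sort_nodup _
    exact fun hm => List.disjoint_of_nodup_append hnd hm (List.mem_singleton_self _)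
  rw [Finset.sort_erase, hd, List.erase_append_right _ hnotmem, List.erase_cons_head,
    List.append_nil]

namespace KRF

def insertWord (k : ℕ) (w : List (ℕ × ℕ)) (T : Tab k) : Tab k :=
  w.foldl (fun T y => insertVal k y.1 y.2 T) T

section Insertion

variable {k : ℕ}

@[simp]
theorem insertWord_nil (T : Tab k) : insertWord k [] T = T := rfl

@[simp]
theorem insertWord_cons (y : ℕ × ℕ) (w : List (ℕ × ℕ)) (T : Tab k) :
    insertWord k (y :: w) T = insertWord k w (insertVal k y.1 y.2 T) := rfl

theorem insertWord_append (w₁ w₂ : List (ℕ × ℕ)) (T : Tab k) :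
    insertWord k (w₁ ++ w₂) T = insertWord k w₂ (insertWord k w₁ T) :=
  List.foldl_append ..

theorem insertVal_single_of_le {x j h v : ℕ} (hx : x ≤ v) (T : Tab k) :
    insertVal k x j (Col.single h v :: T) = Col.double j (k + 1 - j) x v :: T := by
  simp [insertVal, Col.bottomVal, not_lt.mpr hx]

theorem insertVal_double_of_le {x j ht hb vt vb : ℕ} (hx : x ≤ vb) (T : Tab k) :
    insertVal k x j (Col.double ht hb vt vb :: T)
      = Col.double j (k + 1 - j) x vb :: insertVal k vt ht T := by
  simp [insertVal, Col.bottomVal, not_lt.mpr hx]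

theorem entries_insertVal_perm (x j : ℕ) (T : Tab k) :
    (insertVal k x j T).entries.Perm (x :: T.entries) := by
  induction T generalizing x j with
  | nil => rfl
  | cons c rest ih =>
    rcases lt_or_ge c.bottomVal x with hlt | hle
    · simp [insertVal, hlt, Tab.entries]
    · cases c with
      | single h v =>
        rw [insertVal_single_of_le (show x ≤ v from hle)]
        simp [Tab.entries]
      | double ht hb vt vb =>
        rw [insertVal_double_of_le (show x ≤ vb from hle)]
        simpa [Tab.entries] using ((ih vt ht).cons vb).trans (.swap vt vb _)

theorem entries_insertWord_perm (w : List (ℕ × ℕ)) (T : Tab k) :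
    (insertWord k w T).entries.Perm (w.map Prod.fst ++ T.entries) := by
  induction w generalizing T with
  | nil => rfl
  | cons y w ih =>
    exact (ih _).trans (((entries_insertVal_perm _ _ _).append_left _).trans
      List.perm_middle)

theorem insertVal_of_forall_lt {x : ℕ} (j : ℕ) {T : Tab k} (hT : ∀ a ∈ T.entries, a < x) :
    insertVal k x j T = Col.single j x :: T := by
  cases T with
  | nil => rfl
  | cons c rest =>
    have : c.bottomVal < x := hT _ (by cases c <;> simp [Tab.entries, Col.bottomVal])
    simp [insertVal, this]

/-- Letters smaller than the bottom entry `vb` all land on top of the first column, each one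
bumping its predecessor into the remaining columns. -/
theorem insertWord_append_singleton_double (ys : List (ℕ × ℕ)) (y l : ℕ)
    {ht hb vt vb : ℕ} (hys : ∀ z ∈ ys, z.1 < vb) (hy : y < vb) (T : Tab k) :
    insertWord k (ys ++ [(y, l)]) (Col.double ht hb vt vb :: T)
      = Col.double l (k + 1 - l) y vb :: insertWord k ((vt, ht) :: ys) T := by
  induction ys generalizing ht hb vt T with
  | nil => simp [insertVal_double_of_le hy.le]
  | cons z ys ih =>
    simp only [List.cons_append, insertWord_cons,
      insertVal_double_of_le (hys z List.mem_cons_self).le]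
    exact ih (fun a ha => hys a (List.mem_cons_of_mem _ ha)) _

theorem insertWord_append_singleton_single (ys : List (ℕ × ℕ)) (y l : ℕ)
    {h v : ℕ} (hys : ∀ z ∈ ys, z.1 < v) (hy : y < v) (T : Tab k) :
    insertWord k (ys ++ [(y, l)]) (Col.single h v :: T)
      = Col.double l (k + 1 - l) y v :: insertWord k ys T := by
  cases ys with
  | nil => simp [insertVal_single_of_le hy.le]
  | cons z ys =>
    simp only [List.cons_append, insertWord_cons,
      insertVal_single_of_le (hys z List.mem_cons_self).le]
    exact insertWord_append_singleton_double ys y l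
      (fun a ha => hys a (List.mem_cons_of_mem _ ha)) hy T

theorem insertWord_append_max {u : List (ℕ × ℕ)} {x : ℕ} (j : ℕ)
    (hu : ∀ z ∈ u, z.1 < x) :
    insertWord k (u ++ [(x, j)]) [] = Col.single j x :: insertWord k u [] := by
  rw [insertWord_append, insertWord_cons, insertWord_nil]
  refine insertVal_of_forall_lt j fun a ha => ?_
  have : a ∈ u.map Prod.fst := by
    simpa [Tab.entries] using (entries_insertWord_perm u []).subset ha
  obtain ⟨z, hz, rfl⟩ := List.mem_map.mp this
  exact hu z hz

theorem insertWord_append_max_append {u v : List (ℕ × ℕ)} {x y : ℕ} (j l : ℕ)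
    (huv : ∀ z ∈ u ++ v, z.1 < x) (hy : y < x) :
    insertWord k (u ++ (x, j) :: (v ++ [(y, l)])) []
      = Col.double l (k + 1 - l) y x :: insertWord k (u ++ v) [] := by
  rw [← List.singleton_append, ← List.append_assoc, insertWord_append,
    insertWord_append_max j fun z hz => huv z (List.mem_append_left _ hz),
    insertWord_append_singleton_single v y l (fun z hz => huv z (List.mem_append_right _ hz))
      hy, insertWord_append]

end Insertion

section Shadow

variable (k : ℕ) {n : ℕ} (p : Equiv.Perm (Fin n)) (col : Fin n → ℕ)

/-- The letters `x_s^{col s}` of the positions `s ∈ l`, where `x_s = p s + 1`. -/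
def coloredWord (l : List (Fin n)) : List (ℕ × ℕ) :=
  l.map fun s => ((p s : ℕ) + 1, col s)

/-- The column of `P` produced by the shadow line `L = (t, r)` through the highest `X`, at
position `t`, and the rightmost `X`, at position `r`. -/
def shadowColumn (L : Fin n × Fin n) : Col k :=
  if L.1 = L.2 then Col.single (col L.1) ((p L.1 : ℕ) + 1)
  else Col.double (col L.2) (k + 1 - col L.2) ((p L.2 : ℕ) + 1) ((p L.1 : ℕ) + 1)

theorem insertWord_sort_eq_shadowColumn_cons {S : Finset (Fin n)} {t : Fin n} (ht : t ∈ S)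
    (htop : ∀ s ∈ S, p s ≤ p t) :
    insertWord k (coloredWord p col S.sort) [] =
      shadowColumn k p col (t, S.max' ⟨t, ht⟩) ::
        insertWord k (coloredWord p col ((S.erase t).erase (S.max' ⟨t, ht⟩)).sort) [] := by
  have hlt : ∀ s ∈ S, s ≠ t → (p s : ℕ) + 1 < (p t : ℕ) + 1 := fun s hs hst =>
    Nat.succ_lt_succ <| (htop s hs).lt_of_ne fun h => hst (p.injective h)
  have hsort := S.sort_eq_sort_erase_max'_append ⟨t, ht⟩
  have hr : S.max' ⟨t, ht⟩ ∈ S := S.max'_mem _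
  generalize S.max' ⟨t, ht⟩ = r at hsort hr ⊢
  by_cases htr : t = r
  · subst htr
    rw [hsort, Finset.erase_idem]
    simp only [coloredWord, List.map_append, List.map_singleton, shadowColumn, if_true]
    refine insertWord_append_max _ fun z hz => ?_
    obtain ⟨s, hs, rfl⟩ := List.mem_map.mp hz
    obtain ⟨hst, hs⟩ := Finset.mem_erase.mp ((Finset.mem_sort _).mp hs)
    exact hlt s hs hst
  · have htS : t ∈ (S.erase r).sort := (Finset.mem_sort _).mpr (Finset.mem_erase.mpr ⟨htr, ht⟩)
    obtain ⟨u, v, huv⟩ := List.append_of_mem htS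
    have hnd : (u ++ t :: v).Nodup := huv ▸ Finset.sort_nodup (S.erase r) (· ≤ ·)
    have htu : t ∉ u := fun h => List.disjoint_of_nodup_append hnd h List.mem_cons_self
    have hrest : ((S.erase t).erase r).sort = u ++ v := by
      rw [Finset.erase_right_comm, Finset.sort_erase, huv, List.erase_append_right _ htu,
        List.erase_cons_head]
    rw [hsort, huv, List.append_assoc, List.cons_append]
    simp only [coloredWord, List.map_append, List.map_cons, shadowColumn, if_neg htr]
    refine (insertWord_append_max_append _ _ (fun z hz => ?_) (hlt r hr (Ne.symm htr))).trans ?_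
    · rw [← List.map_append, ← hrest] at hz
      obtain ⟨s, hs, rfl⟩ := List.mem_map.mp hz
      obtain ⟨hsr, hst, hs⟩ : s ≠ r ∧ s ≠ t ∧ s ∈ S := by simpa using hs
      exact hlt s hs hst
    · rw [hrest, List.map_append]

theorem insertWord_sort_eq_map_shadowAux (S : Finset (Fin n)) :
    insertWord k (coloredWord p col S.sort) [] = (shadowAux n p S).map (shadowColumn k p col) := by
  induction S using Finset.strongInduction with
  | H S ih =>
    rw [shadowAux]
    split_ifs with h
    · obtain ⟨t, ht, hpt⟩ := Finset.mem_image.mp ((S.image p).max'_mem (h.image p))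
      have htop : ∀ s ∈ S, p s ≤ p t := fun s hs =>
        hpt ▸ (S.image p).le_max' _ (Finset.mem_image_of_mem p hs)
      rw [← hpt, p.symm_apply_apply, insertWord_sort_eq_shadowColumn_cons k p col ht htop,
        List.map_cons, ih _ ((Finset.erase_subset _ _).trans_ssubset (Finset.erase_ssubset ht))]
    · simp [Finset.not_nonempty_iff_eq_empty.mp h, coloredWord]

end Shadow

/-- The shape changes of a single insertion: a new first column `1_j`, the first column `1_h`
turned into a `2`, or a `2` kept in front of such a change further right. -/
inductive InsertStep {k : ℕ} : Word k → Word k → Prop where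
  | newColumn (j : ℕ) (z : Word k) : InsertStep z (Letter.one j :: z)
  | stack (h : ℕ) (z : Word k) : InsertStep (Letter.one h :: z) (Letter.two :: z)
  | skip {z w : Word k} : InsertStep z w → InsertStep (Letter.two :: z) (Letter.two :: w)

theorem insertStep_shape_insertVal {k : ℕ} (x j : ℕ) (T : Tab k) :
    InsertStep (Tab.shape T) (Tab.shape (insertVal k x j T)) := by
  induction T generalizing x j with
  | nil => exact .newColumn j []
  | cons c rest ih =>
    rcases lt_or_ge c.bottomVal x with hlt | hle
    · rw [show insertVal k x j (c :: rest) = Col.single j x :: c :: rest by simp [insertVal, hlt]]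
      exact .newColumn j _
    · cases c with
      | single h v =>
        rw [insertVal_single_of_le (show x ≤ v from hle)]
        exact .stack h _
      | double ht hb vt vb =>
        rw [insertVal_double_of_le (show x ≤ vb from hle)]
        exact (ih vt ht).skip

theorem shape_updateTab {k i : ℕ} {z w : Word k} (hzw : InsertStep z w) {R : Tab k}
    (hR : Tab.shape R = z) : Tab.shape (updateTab k i z w R) = w := by
  induction hzw generalizing R with
  | newColumn j z => simp [updateTab, Tab.shape, Col.shape, ← hR]
  | stack h z =>
    obtain _ | ⟨_ | _, R⟩ := R <;> simp_all [Tab.shape, Col.shape, updateTab]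
  | skip _ ih =>
    obtain _ | ⟨c, R⟩ := R
    · simp [Tab.shape] at hR
    · obtain ⟨hc, hR⟩ := List.cons_eq_cons.mp hR
      exact congrArg₂ List.cons hc (ih hR)

theorem PPartial_succ (k n : ℕ) (π : ColoredPerm n k) {m : ℕ} (hm : m < n) :
    PPartial k n π (m + 1) =
      insertVal k ((π.perm ⟨m, hm⟩ : ℕ) + 1) (π.color ⟨m, hm⟩) (PPartial k n π m) := by
  have hm' : m < (List.finRange n).length := by simpa using hm
  simp [PPartial, List.take_add_one, List.getElem?_eq_getElem hm', List.foldl_append]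

theorem PTab_eq_map_shadowLines (k n : ℕ) (π : ColoredPerm n k) :
    PTab k n π = (shadowLines π).map (shadowColumn k π.perm π.color) := by
  rw [shadowLines, ← insertWord_sort_eq_map_shadowAux, PTab, PPartial, Fin.sort_univ,
    List.take_of_length_le (by simp), insertWord, coloredWord, List.foldl_map]

theorem shape_QTab (k n : ℕ) (π : ColoredPerm n k) :
    Tab.shape (QTab k n π) = Tab.shape (PTab k n π) := by
  suffices h : ∀ m ≤ n, Tab.shape (chainTab k (QChain k n π) m) = QChain k n π m from
    h n le_rfl
  intro m hm
  induction m with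
  | zero => rfl
  | succ m ih =>
    simp only [chainTab, QChain, PPartial_succ k n π hm]
    exact shape_updateTab (insertStep_shape_insertVal _ _ _) (ih (Nat.le_of_succ_le hm))

theorem Col.exists_eq_single_of_shape_eq {k h : ℕ} {c : Col k} (hc : c.shape = Letter.one h) :
    ∃ v, c = Col.single h v := by
  cases c <;> simp_all [Col.shape]

theorem shadow_single_column_general (k n : ℕ) (π : ColoredPerm n k)
    (i : ℕ) (i₁ i₂ : Fin n) (hline : (shadowLines π)[i]? = some (i₁, i₂)) (heq : i₁ = i₂) :
    (∃ v, (PTab k n π)[i]? = some (Col.single (π.color i₁) v)) ∧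
    (∃ v, (QTab k n π)[i]? = some (Col.single (π.color i₁) v)) := by
  subst heq
  have hP : (PTab k n π)[i]? = some (Col.single (π.color i₁) ((π.perm i₁ : ℕ) + 1)) := by
    simp [PTab_eq_map_shadowLines, hline, shadowColumn]
  refine ⟨⟨_, hP⟩, ?_⟩
  have hQ : ((QTab k n π)[i]?).map Col.shape = some (Letter.one (π.color i₁)) := by
    rw [← List.getElem?_map, ← Tab.shape, shape_QTab, Tab.shape, List.getElem?_map, hP]
    rfl
  obtain ⟨c, hc, hcs⟩ := Option.map_eq_some_iff.mp hQ
  obtain ⟨v, rfl⟩ := Col.exists_eq_single_of_shape_eq hcs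
  exact ⟨v, hc⟩

/-- Let `π` be a `k`-colored permutation with insertion pair
`(P, Q) = (P(π), Q(π))`.  If the shadow line `L_i` of the square diagram of `π` passes
through a single `X^j`, then the `i`-th column of `P` and the column of `Q` in the same
position each consist of a single `k`-ribbon of height `j`. -/
theorem shadow_single_column (k n : ℕ) (hk : 1 ≤ k) (π : ColoredPerm n k)
    (i : ℕ) (i₁ i₂ : Fin n) (hline : (shadowLines π)[i]? = some (i₁, i₂)) (heq : i₁ = i₂) :
    (∃ v, (PTab k n π)[i]? = some (Col.single (π.color i₁) v)) ∧
    (∃ v, (QTab k n π)[i]? = some (Col.single (π.color i₁) v)) :=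
  shadow_single_column_general k n π i i₁ i₂ hline heq

end KRF
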